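/- arXiv:2505.12271 — 2 statements merged into one kernel-verified Lean document; each statement's English description precedes it below -/
import Mathlib

section
/- Let N ≥ 1 and 1 ≤ p ≤ N be integers. Define q_{2k+1}(z) := z^{2k+1} and q_{2k}(z) := Σ_{j=0}^{k} ((2k)!!/(2j)!!)·z^{2j}, where (2m)!! := 2^m·m!. Then the holomorphic spectral moment of the Ginibre symplectic ensemble satisfies: (1/π) · ∫_ℂ z^{2p}·(conj(z) − z) · Σ_{k=0}^{N−1} (1/(2·(2k+1)!)) · (q_{2k+1}(z)·q_{2k}(conj(z)) − q_{2k}(z)·q_{2k+1}(conj(z))) · e^{−|z|²} dλ(z) = −2^{p−1}·N!/(N−p)!, where λ is Lebesgue measure on ℂ. -/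
/-!
Expanding `q_{2k}`, the integrand becomes a combination of the functions
`z ^ a * conj z ^ b * exp (-|z|²)`, and in polar coordinates these integrate to `π a! δ_{ab}`:
the Gaussian integral pairs a holomorphic monomial `z ^ m` with the `m`-th coefficient of an
antiholomorphic polynomial. For `p ≥ 1` only two pairings in the `k`-th summand of the kernel
survive, and that summand contributes `π 2^{p-1} ((k)_p - (k+1)_p)`, with `(k)_p = k!/(k-p)!` the
falling factorial. The sum over `k < N` telescopes to `-π 2^{p-1} (N)_p`.
-/

open Finset MeasureTheory

noncomputable def qEven (k : ℕ) (z : ℂ) : ℂ :=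
  ∑ j ∈ Finset.range (k + 1),
    ((((2 : ℝ) ^ k * (k.factorial : ℝ)) / ((2 : ℝ) ^ j * (j.factorial : ℝ)) : ℝ) : ℂ) * z ^ (2 * j)

noncomputable def qOdd (k : ℕ) (z : ℂ) : ℂ := z ^ (2 * k + 1)

open ComplexConjugate Complex Polynomial
open scoped Nat Real

lemma integral_Ioo_exp_int_mul_I (k : ℤ) :
    ∫ θ in Set.Ioo (-π) π, exp (k * θ * I) = if k = 0 then (2 * π : ℂ) else 0 := by
  rw [← integral_Ioc_eq_integral_Ioo, ← intervalIntegral.integral_of_le (by linarith [Real.pi_pos])]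
  split_ifs with hk
  · simp only [hk, Int.cast_zero, zero_mul, exp_zero, intervalIntegral.integral_const,
      sub_neg_eq_add, real_smul, ofReal_add, mul_one]
    ring
  · have hc : (k * I : ℂ) ≠ 0 := mul_ne_zero (by exact_mod_cast hk) I_ne_zero
    have hper : exp (k * I * π) = exp (k * I * (-π : ℝ)) := by
      rw [← mul_one (exp (k * I * (-π : ℝ))), ← exp_int_mul_two_pi_mul_I k, ← exp_add]
      push_cast; ring_nf
    simp_rw [mul_right_comm _ _ I]
    rw [integral_exp_mul_complex hc, hper, sub_self, zero_div]

lemma integral_Ioi_pow_mul_exp_neg_sq (m : ℕ) :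
    ∫ r in Set.Ioi (0 : ℝ), r ^ (2 * m + 1) * Real.exp (-r ^ 2) = m ! / 2 := by
  have h := integral_rpow_mul_exp_neg_rpow (p := 2) (q := (2 * m + 1 : ℕ)) two_pos
    (neg_one_lt_zero.trans_le (Nat.cast_nonneg _))
  have hΓ : ((((2 * m + 1 : ℕ) : ℝ) + 1) / 2) = m + 1 := by push_cast; ring
  simp only [Real.rpow_natCast, Real.rpow_two, hΓ, Real.Gamma_nat_eq_factorial] at h
  rw [h]
  ring

lemma integrable_pow_mul_conj_pow_mul_gaussian (m n : ℕ) :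
    Integrable fun z : ℂ => z ^ m * conj z ^ n * (Real.exp (-‖z‖ ^ 2) : ℂ) := by
  have hrad : Integrable fun z : ℂ => ‖z‖ ^ (m + n) * Real.exp (-‖z‖ ^ 2) := by
    refine (integrable_fun_norm_addHaar volume (f := fun r => r ^ (m + n) * Real.exp (-r ^ 2))).2 ?_
    have := integrableOn_rpow_mul_exp_neg_mul_sq (b := 1) one_pos (s := (m + n + 1 : ℕ))
      (neg_one_lt_zero.trans_le (Nat.cast_nonneg _))
    simp only [Real.rpow_natCast, neg_mul, one_mul] at this
    refine this.congr_fun (fun r _ => ?_) measurableSet_Ioi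
    simp only [finrank_real_complex, Nat.add_one_sub_one, pow_one, smul_eq_mul]
    ring
  refine hrad.mono' (by fun_prop) (Filter.Eventually.of_forall fun z => ?_)
  simp [pow_add, -ofReal_exp, abs_of_pos (Real.exp_pos _)]

lemma Complex.polarCoord_symm_eq_mul_exp (r θ : ℝ) :
    Complex.polarCoord.symm (r, θ) = r * exp (θ * I) := by
  rw [Complex.polarCoord_symm_apply, exp_mul_I, ← ofReal_cos, ← ofReal_sin]

lemma integral_pow_mul_conj_pow_mul_gaussian (m n : ℕ) :
    ∫ z : ℂ, z ^ m * conj z ^ n * (Real.exp (-‖z‖ ^ 2) : ℂ)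
      = if m = n then (π * m ! : ℂ) else 0 := by
  have hpolar : ∀ p ∈ Set.Ioi (0 : ℝ) ×ˢ Set.Ioo (-π) π,
      p.1 • ((Complex.polarCoord.symm p) ^ m * conj (Complex.polarCoord.symm p) ^ n
        * (Real.exp (-‖Complex.polarCoord.symm p‖ ^ 2) : ℂ))
      = ((p.1 ^ (m + n + 1) * Real.exp (-p.1 ^ 2) : ℝ) : ℂ)
        * exp (((m - n : ℤ) : ℂ) * p.2 * I) := by
    rintro ⟨r, θ⟩ ⟨hr, -⟩
    have hexp : exp (θ * I) ^ m * exp (-(θ * I)) ^ n = exp (((m - n : ℤ) : ℂ) * θ * I) := by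
      rw [← exp_nat_mul, ← exp_nat_mul, ← exp_add]
      push_cast; ring_nf
    rw [norm_polarCoord_symm, abs_of_pos (Set.mem_Ioi.mp hr), polarCoord_symm_eq_mul_exp,
      map_mul, conj_ofReal, ← exp_conj, map_mul, conj_ofReal, conj_I, mul_neg, ← hexp, real_smul]
    push_cast
    ring
  rw [← Complex.integral_comp_polarCoord_symm, _root_.polarCoord_target,
    setIntegral_congr_fun (measurableSet_Ioi.prod measurableSet_Ioo) hpolar,
    Measure.volume_eq_prod,
    setIntegral_prod_mul (f := fun r : ℝ => ((r ^ (m + n + 1) * Real.exp (-r ^ 2) : ℝ) : ℂ))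
      (g := fun θ : ℝ => exp (((m - n : ℤ) : ℂ) * θ * I)),
    integral_complex_ofReal, integral_Ioo_exp_int_mul_I]
  rcases eq_or_ne m n with rfl | hmn
  · rw [show m + m + 1 = 2 * m + 1 by ring, integral_Ioi_pow_mul_exp_neg_sq]
    simp only [sub_self, if_true]
    push_cast
    ring
  · simp [sub_eq_zero, hmn]

lemma integrable_eval_mul_eval_conj_mul_gaussian (P Q : ℂ[X]) :
    Integrable fun z : ℂ => P.eval z * Q.eval (conj z) * (Real.exp (-‖z‖ ^ 2) : ℂ) := by
  simp_rw [eval_eq_sum_range, sum_mul_sum, sum_mul]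
  refine integrable_finsetSum _ fun i _ => integrable_finsetSum _ fun j _ => ?_
  exact ((integrable_pow_mul_conj_pow_mul_gaussian i j).const_mul (P.coeff i * Q.coeff j)).congr
    (.of_forall fun z => by ring)

lemma integrable_pow_mul_eval_conj_mul_gaussian (m : ℕ) (Q : ℂ[X]) :
    Integrable fun z : ℂ => z ^ m * Q.eval (conj z) * (Real.exp (-‖z‖ ^ 2) : ℂ) := by
  simpa using integrable_eval_mul_eval_conj_mul_gaussian (X ^ m) Q

lemma integrable_eval_mul_conj_pow_mul_gaussian (P : ℂ[X]) (n : ℕ) :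
    Integrable fun z : ℂ => P.eval z * conj z ^ n * (Real.exp (-‖z‖ ^ 2) : ℂ) := by
  simpa using integrable_eval_mul_eval_conj_mul_gaussian P (X ^ n)

lemma integral_pow_mul_eval_conj_mul_gaussian (m : ℕ) (Q : ℂ[X]) :
    ∫ z : ℂ, z ^ m * Q.eval (conj z) * (Real.exp (-‖z‖ ^ 2) : ℂ) = π * m ! * Q.coeff m := by
  have hQ : Q.natDegree < max Q.natDegree m + 1 := by omega
  have hm : m ∈ range (max Q.natDegree m + 1) := mem_range.mpr (by omega)
  have hexpand (z : ℂ) : z ^ m * Q.eval (conj z) * (Real.exp (-‖z‖ ^ 2) : ℂ)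
      = ∑ i ∈ range (max Q.natDegree m + 1),
          Q.coeff i * (z ^ m * conj z ^ i * (Real.exp (-‖z‖ ^ 2) : ℂ)) := by
    rw [eval_eq_sum_range' hQ, mul_sum, sum_mul]
    exact sum_congr rfl fun i _ => by ring
  simp_rw [hexpand]
  rw [integral_finsetSum _ fun i _ => (integrable_pow_mul_conj_pow_mul_gaussian m i).const_mul _]
  simp_rw [integral_const_mul, integral_pow_mul_conj_pow_mul_gaussian, mul_ite, mul_zero,
    sum_ite_eq, if_pos hm]
  ring

lemma integral_eval_mul_conj_pow_mul_gaussian (P : ℂ[X]) (n : ℕ) :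
    ∫ z : ℂ, P.eval z * conj z ^ n * (Real.exp (-‖z‖ ^ 2) : ℂ) = π * n ! * P.coeff n := by
  have hP : P.natDegree < max P.natDegree n + 1 := by omega
  have hn : n ∈ range (max P.natDegree n + 1) := mem_range.mpr (by omega)
  have hexpand (z : ℂ) : P.eval z * conj z ^ n * (Real.exp (-‖z‖ ^ 2) : ℂ)
      = ∑ i ∈ range (max P.natDegree n + 1),
          P.coeff i * (z ^ i * conj z ^ n * (Real.exp (-‖z‖ ^ 2) : ℂ)) := by
    rw [eval_eq_sum_range' hP, sum_mul, sum_mul]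
    exact sum_congr rfl fun i _ => by ring
  simp_rw [hexpand]
  rw [integral_finsetSum _ fun i _ => (integrable_pow_mul_conj_pow_mul_gaussian i n).const_mul _]
  simp_rw [integral_const_mul, integral_pow_mul_conj_pow_mul_gaussian, mul_ite, mul_zero,
    sum_ite_eq', if_pos hn]
  ring

noncomputable def qEvenPoly (k : ℕ) : ℂ[X] :=
  ∑ j ∈ range (k + 1), C ((((2 : ℝ) ^ k * k !) / ((2 : ℝ) ^ j * j !) : ℝ) : ℂ) * X ^ (2 * j)

lemma eval_qEvenPoly (k : ℕ) (z : ℂ) : (qEvenPoly k).eval z = qEven k z := by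
  simp [qEvenPoly, qEven, eval_finsetSum]

lemma natDegree_qEvenPoly_le (k : ℕ) : (qEvenPoly k).natDegree ≤ 2 * k :=
  natDegree_sum_le_of_forall_le _ _ fun j hj =>
    (natDegree_C_mul_X_pow_le _ _).trans (by have := mem_range.mp hj; omega)

lemma coeff_qEvenPoly_two_mul {k j : ℕ} (hj : j ≤ k) :
    (qEvenPoly k).coeff (2 * j) = (((2 : ℝ) ^ k * k !) / ((2 : ℝ) ^ j * j !) : ℝ) := by
  simp [qEvenPoly, Nat.lt_succ_iff.mpr hj]

lemma two_pow_mul_factorial_div_eq_descFactorial {i k : ℕ} (hi : i ≤ k) :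
    ((2 : ℝ) ^ k * k !) / ((2 : ℝ) ^ (k - i) * (k - i)!) = 2 ^ i * k.descFactorial i := by
  have hfac : (k ! : ℝ) = (k - i)! * k.descFactorial i := by
    exact_mod_cast (Nat.factorial_mul_descFactorial hi).symm
  rw [hfac, ← Nat.sub_add_cancel hi, pow_add, Nat.add_sub_cancel]
  field_simp

lemma coeff_X_pow_mul_qEvenPoly (i k : ℕ) :
    (X ^ (2 * i) * qEvenPoly k).coeff (2 * k) = (2 ^ i * k.descFactorial i : ℂ) := by
  rw [coeff_X_pow_mul']
  split_ifs with h
  · rw [← Nat.mul_sub, coeff_qEvenPoly_two_mul (Nat.sub_le k i),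
      two_pow_mul_factorial_div_eq_descFactorial (by omega)]
    push_cast; ring
  · rw [Nat.descFactorial_eq_zero_iff_lt.mpr (by omega)]
    simp

noncomputable def skewMomentIntegrand (p k : ℕ) (z : ℂ) : ℂ :=
  z ^ (2 * p) * (conj z - z) * (qOdd k z * qEven k (conj z) - qEven k z * qOdd k (conj z)) *
    (Real.exp (-‖z‖ ^ 2) : ℂ)

lemma skewMomentIntegrand_eq (p k : ℕ) (z : ℂ) :
    skewMomentIntegrand p k z =
      z ^ (2 * p + 2 * k + 1) * (X * qEvenPoly k).eval (conj z) * (Real.exp (-‖z‖ ^ 2) : ℂ)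
      - z ^ (2 * p + 2 * k + 2) * (qEvenPoly k).eval (conj z) * (Real.exp (-‖z‖ ^ 2) : ℂ)
      - (X ^ (2 * p) * qEvenPoly k).eval z * conj z ^ (2 * k + 2) * (Real.exp (-‖z‖ ^ 2) : ℂ)
      + (X ^ (2 * p + 1) * qEvenPoly k).eval z * conj z ^ (2 * k + 1) *
          (Real.exp (-‖z‖ ^ 2) : ℂ) := by
  simp only [skewMomentIntegrand, qOdd, ← eval_qEvenPoly, eval_mul, eval_X, eval_pow]
  ring

lemma integrable_skewMomentIntegrand (p k : ℕ) : Integrable (skewMomentIntegrand p k) := by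
  refine Integrable.congr ?_ (.of_forall fun z => (skewMomentIntegrand_eq p k z).symm)
  exact (((integrable_pow_mul_eval_conj_mul_gaussian _ _).sub
    (integrable_pow_mul_eval_conj_mul_gaussian _ _)).sub
    (integrable_eval_mul_conj_pow_mul_gaussian _ _)).add
    (integrable_eval_mul_conj_pow_mul_gaussian _ _)

lemma integral_skewMomentIntegrand {p : ℕ} (hp : 1 ≤ p) (k : ℕ) :
    ∫ z, skewMomentIntegrand p k z =
      2 * (2 * k + 1)! * (π * 2 ^ (p - 1) * (k.descFactorial p - (k + 1).descFactorial p)) := by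
  have hvanish : ∀ n, 2 * k < n → (qEvenPoly k).coeff n = 0 := fun n hn =>
    coeff_eq_zero_of_natDegree_lt ((natDegree_qEvenPoly_le k).trans_lt hn)
  have hcoeff_even : (X ^ (2 * p) * qEvenPoly k).coeff (2 * k + 2) =
      (2 ^ (p - 1) * k.descFactorial (p - 1) : ℂ) := by
    rw [← coeff_X_pow_mul_qEvenPoly, show 2 * p = 2 * (p - 1) + 2 by omega, pow_add, mul_right_comm,
      coeff_mul_X_pow]
  have hcoeff_odd : (X ^ (2 * p + 1) * qEvenPoly k).coeff (2 * k + 1) =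
      (2 ^ p * k.descFactorial p : ℂ) := by
    rw [← coeff_X_pow_mul_qEvenPoly, pow_succ, mul_right_comm, coeff_mul_X]
  have hdesc_succ : (k + 1).descFactorial p = (k + 1) * k.descFactorial (p - 1) := by
    rw [← Nat.succ_descFactorial_succ, Nat.sub_add_cancel hp]
  have hL := integrable_pow_mul_eval_conj_mul_gaussian
  have hR := integrable_eval_mul_conj_pow_mul_gaussian
  rw [integral_congr_ae (.of_forall (skewMomentIntegrand_eq p k)),
    integral_add ((hL _ _).sub' (hL _ _) |>.sub' (hR _ _)) (hR _ _),
    integral_sub ((hL _ _).sub' (hL _ _)) (hR _ _), integral_sub (hL _ _) (hL _ _),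
    integral_pow_mul_eval_conj_mul_gaussian, integral_pow_mul_eval_conj_mul_gaussian,
    integral_eval_mul_conj_pow_mul_gaussian, integral_eval_mul_conj_pow_mul_gaussian,
    coeff_X_mul, hvanish _ (by omega), hvanish _ (by omega), hcoeff_even, hcoeff_odd, hdesc_succ,
    Nat.factorial_succ (2 * k + 1), ← pow_sub_one_mul (by omega : p ≠ 0)]
  push_cast
  ring

/-- Holomorphic spectral moment of the Ginibre symplectic ensemble: for
`1 ≤ p ≤ N`,
`(1/π) ∫_ℂ z^{2p} (conj z − z) ∑_{k<N} (1/(2(2k+1)!))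
  (q_{2k+1}(z) q_{2k}(conj z) − q_{2k}(z) q_{2k+1}(conj z)) e^{−|z|²} dλ(z) = −2^{p−1} N!/(N−p)!`. -/
theorem ginse_holomorphic_moment (N p : ℕ) (hp1 : 1 ≤ p) (hpN : p ≤ N) :
    (1 / (Real.pi : ℂ)) * ∫ z : ℂ,
        z ^ (2 * p) * ((starRingEnd ℂ) z - z) *
          (∑ k ∈ Finset.range N,
            (1 / (2 * ((2 * k + 1).factorial : ℂ))) *
              (qOdd k z * qEven k ((starRingEnd ℂ) z) - qEven k z * qOdd k ((starRingEnd ℂ) z))) *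
          (Real.exp (-‖z‖ ^ 2) : ℂ)
      = -(2 : ℂ) ^ (p - 1) * ((N.factorial : ℂ) / ((N - p).factorial : ℂ)) := by
  have hcancel (k : ℕ) (x : ℂ) : 1 / (2 * ((2 * k + 1)! : ℂ)) * (2 * (2 * k + 1)! * x) = x := by
    rw [← mul_assoc, one_div_mul_cancel (by simp [Nat.factorial_ne_zero]), one_mul]
  have hdesc : (N.descFactorial p : ℂ) = N ! / (N - p)! := by
    rw [eq_div_iff (Nat.cast_ne_zero.mpr (Nat.factorial_ne_zero _)), mul_comm, ← Nat.cast_mul,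
      Nat.factorial_mul_descFactorial hpN]
  rw [integral_congr_ae (g := fun z => ∑ k ∈ range N,
      1 / (2 * ((2 * k + 1)! : ℂ)) * skewMomentIntegrand p k z) (.of_forall fun z => by
        simp only [skewMomentIntegrand, mul_sum, sum_mul]
        exact sum_congr rfl fun k _ => by ring),
    integral_finsetSum _ fun k _ => (integrable_skewMomentIntegrand p k).const_mul _]
  simp_rw [integral_const_mul, integral_skewMomentIntegrand hp1, hcancel]
  rw [← mul_sum, sum_range_sub' (fun k => (k.descFactorial p : ℂ)),
    Nat.descFactorial_of_lt (by omega : 0 < p), hdesc]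
  field_simp
  ring
end

section
/- Let p1, p2 ≥ 0 be integers with p := p1 + p2 ≥ 1. Then for every real number α (with the convention 0^0 := 1): Σ_{r=−min(p1,p2)}^{min(p1,p2)} Σ_{l1=0}^{p1} Σ_{l2=0}^{p2} (α^{p−l1−l2}/(l1+l2+1)) · binom(p1,l1)·binom(p1+l1, l1+r)·binom(p2,l2)·binom(p2+l2, l2−r) = Σ_{k=1}^{p} (1/p)·binom(p,k)·binom(p,k−1)·(1+α)^k, i.e. the Hermitian limit τ = 1 of L1(p1,p2) equals the Narayana polynomial N_p(1+α). -/
/-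
Summing over `r` first, the two shifted binomials convolve (Vandermonde) to
`binom(p + l1 + l2, l1 + l2)`, which depends on `l1, l2` only through `l = l1 + l2`; a second
Vandermonde convolution then collapses the double sum to
`∑_l binom(p,l) binom(p+l,l) α^(p-l) / (l+1)`. Expanding `(1+α)^k` in the Narayana polynomial,
the coefficient of `α^(p-l)` is computed with `binom(p,k) binom(k,m) = binom(p,m) binom(p-m,k-m)`
and a third Vandermonde convolution, and the two sides agree because
`(l+1) binom(p+l,l+1) = p binom(p+l,l)`.
-/

open Finset

/-- Binomial coefficient `binom(n, m)` for `n : ℕ`, `m : ℤ`, zero for `m < 0` or `m > n`. -/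
noncomputable def zbinom (n : ℕ) (m : ℤ) : ℝ :=
  if 0 ≤ m ∧ m ≤ (n : ℤ) then (n.choose m.toNat : ℝ) else 0

lemma zbinom_ne_zero_iff {n : ℕ} {m : ℤ} : zbinom n m ≠ 0 ↔ 0 ≤ m ∧ m ≤ n := by
  unfold zbinom
  split_ifs with h
  · simp [h, Nat.choose_eq_zero_iff]
  · simpa using h

lemma zbinom_natCast (n j : ℕ) : zbinom n j = n.choose j := by
  by_cases h : j ≤ n
  · simp [zbinom, h]
  · simp [zbinom, Nat.choose_eq_zero_of_lt (not_le.1 h), h]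

lemma finsum_zbinom_mul_zbinom_sub (a b n : ℕ) :
    ∑ᶠ j : ℤ, zbinom a j * zbinom b (n - j) = (a + b).choose n := by
  rw [finsum_eq_sum_of_support_subset _ (s := (range (n + 1)).map Nat.castEmbedding), sum_map,
    Nat.add_choose_eq, Nat.cast_sum, Nat.sum_antidiagonal_eq_sum_range_succ_mk]
  · refine sum_congr rfl fun j hj => ?_
    rw [mem_range] at hj
    rw [Nat.castEmbedding_apply, ← Nat.cast_sub (by omega), zbinom_natCast, zbinom_natCast,
      Nat.cast_mul]
  · intro j hj
    simp only [Function.mem_support, mul_ne_zero_iff, zbinom_ne_zero_iff] at hj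
    simp only [coe_map, Nat.castEmbedding_apply, Set.mem_image, mem_coe, mem_range]
    exact ⟨j.toNat, by omega, by omega⟩

lemma finsum_zbinom_add_mul_zbinom_sub (a b s t : ℕ) :
    ∑ᶠ r : ℤ, zbinom a (s + r) * zbinom b (t - r) = (a + b).choose (s + t) := by
  rw [← finsum_zbinom_mul_zbinom_sub, ← finsum_comp_equiv (Equiv.addLeft (s : ℤ))
    (f := fun j => zbinom a j * zbinom b ((s + t : ℕ) - j))]
  refine finsum_congr fun r => ?_
  rw [Equiv.coe_addLeft, Nat.cast_add, add_sub_add_left_eq_sub]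

lemma sum_Icc_zbinom_add_mul_zbinom_sub {p1 p2 l1 l2 : ℕ} (h1 : l1 ≤ p1) (h2 : l2 ≤ p2) :
    ∑ r ∈ Icc (-(min p1 p2 : ℤ)) (min p1 p2),
        zbinom (p1 + l1) (l1 + r) * zbinom (p2 + l2) (l2 - r)
      = (p1 + l1 + (p2 + l2)).choose (l1 + l2) := by
  rw [← finsum_zbinom_add_mul_zbinom_sub, finsum_eq_sum_of_support_subset]
  intro r hr
  simp only [Function.mem_support, mul_ne_zero_iff, zbinom_ne_zero_iff] at hr
  simp only [coe_Icc, Set.mem_Icc]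
  omega

lemma sum_range_sum_range_choose_mul_choose {R : Type*} [CommSemiring R] (m n : ℕ)
    (h : ℕ → R) :
    ∑ i ∈ range (m + 1), ∑ j ∈ range (n + 1), (m.choose i * n.choose j : R) * h (i + j)
      = ∑ l ∈ range (m + n + 1), ((m + n).choose l : R) * h l := by
  rw [← sum_product', ← sum_fiberwise_of_maps_to (g := fun x => x.1 + x.2)
    (t := range (m + n + 1)) (fun x hx => by simp only [mem_product, mem_range] at hx ⊢; omega)]
  refine sum_congr rfl fun l _ => ?_
  rw [Nat.add_choose_eq, Nat.cast_sum, sum_mul]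
  refine sum_congr_of_eq_on_inter ?_ ?_ ?_
  · intro x hx hx'
    exact absurd (mem_filter.1 hx).2 (by simpa using hx')
  · intro x hx hx'
    rw [HasAntidiagonal.mem_antidiagonal] at hx
    have hout : m < x.1 ∨ n < x.2 := by
      simp only [mem_filter, mem_product, mem_range] at hx'
      omega
    rcases hout with hm | hn
    · simp [Nat.choose_eq_zero_of_lt hm]
    · simp [Nat.choose_eq_zero_of_lt hn]
  · intro x hx hx'
    rw [HasAntidiagonal.mem_antidiagonal.1 hx', Nat.cast_mul]

lemma one_add_pow_eq_sum_range {R : Type*} [CommSemiring R] (x : R) {k N : ℕ} (h : k ≤ N) :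
    (1 + x) ^ k = ∑ t ∈ range (N + 1), (k.choose t : R) * x ^ t := by
  rw [add_comm, add_pow, sum_subset (range_subset_range.2 (show k + 1 ≤ N + 1 by omega))]
  · exact sum_congr rfl fun t _ => by rw [one_pow, mul_one, mul_comm]
  · intro t _ ht
    rw [mem_range, not_lt] at ht
    rw [Nat.choose_eq_zero_of_lt (by omega), Nat.cast_zero, mul_zero]

lemma sum_range_choose_mul_choose_mul_choose {p m l : ℕ} (h : m + l = p) :
    ∑ k ∈ range (p + 1), p.choose k * p.choose (p + 1 - k) * k.choose m
      = p.choose m * (p + l).choose (l + 1) := by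
  have vandermonde : (l + p).choose (l + 1)
      = ∑ i ∈ range (l + 1), l.choose i * p.choose (l + 1 - i) := by
    rw [Nat.add_choose_eq, Nat.sum_antidiagonal_eq_sum_range_succ_mk, sum_range_succ,
      Nat.choose_succ_self, zero_mul, add_zero]
  rw [show p + 1 = m + (l + 1) by omega, sum_range_add, sum_eq_zero, zero_add, add_comm p,
    vandermonde, mul_sum]
  · refine sum_congr rfl fun i _ => ?_
    rw [mul_right_comm, Nat.choose_mul (by omega), show p - m = l by omega,
      Nat.add_sub_cancel_left, show m + (l + 1) - (m + i) = l + 1 - i by omega]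
    ring
  · intro k hk
    rw [Nat.choose_eq_zero_of_lt (mem_range.1 hk), mul_zero]

section Narayana

variable {K : Type*} [Field K]

def narayana (p : ℕ) (t : K) : K :=
  ∑ k ∈ Icc 1 p, (1 / (p : K)) * (p.choose k : K) * (p.choose (k - 1) : K) * t ^ k

lemma narayana_eq_sum_range (p : ℕ) (t : K) :
    narayana p t
      = (1 / (p : K)) * ∑ k ∈ range (p + 1), (p.choose k * p.choose (p + 1 - k) : ℕ) * t ^ k := by
  have hsymm : ∀ k ∈ Icc 1 p, (p.choose k : K) * p.choose (k - 1)
      = (p.choose k * p.choose (p + 1 - k) : ℕ) := by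
    intro k hk
    rw [mem_Icc] at hk
    rw [← Nat.choose_symm (show k - 1 ≤ p by omega), show p - (k - 1) = p + 1 - k by omega,
      Nat.cast_mul]
  have hsub : Icc 1 p ⊆ range (p + 1) := fun k hk => by
    rw [mem_Icc] at hk
    rw [mem_range]
    omega
  rw [narayana, mul_sum, ← sum_subset hsub]
  · exact sum_congr rfl fun k hk => by rw [mul_assoc (1 / (p : K)), hsymm k hk, mul_assoc]
  · intro k hk hk'
    rw [show k = 0 by simp only [mem_range, mem_Icc] at hk hk'; omega]
    simp

variable [CharZero K]

lemma narayana_one_add {p : ℕ} (hp : 1 ≤ p) (α : K) :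
    narayana p (1 + α)
      = ∑ l ∈ range (p + 1), (p.choose l : K) * ((p + l).choose l * α ^ (p - l) / (l + 1)) := by
  have hcoeff : ∀ l ≤ p, ((p.choose (p - l) * (p + l).choose (l + 1) : ℕ) : K) / p
      = p.choose l * ((p + l).choose l / (l + 1)) := by
    intro l hl
    have h := Nat.choose_succ_right_eq (p + l) l
    rw [Nat.add_sub_cancel] at h
    have h' : ((p + l).choose (l + 1) : K) * (l + 1) = (p + l).choose l * p := by exact_mod_cast h
    have hp0 : (p : K) ≠ 0 := Nat.cast_ne_zero.2 (by omega)
    rw [Nat.choose_symm hl]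
    field_simp
    push_cast
    linear_combination (p.choose l : K) * h'
  rw [narayana_eq_sum_range]
  calc (1 / (p : K)) * ∑ k ∈ range (p + 1),
          ((p.choose k * p.choose (p + 1 - k) : ℕ) : K) * (1 + α) ^ k
      = ∑ t ∈ range (p + 1), (1 / (p : K)) *
          ((∑ k ∈ range (p + 1), p.choose k * p.choose (p + 1 - k) * k.choose t : ℕ) : K)
            * α ^ t := by
        simp_rw [mul_sum, Nat.cast_sum, mul_sum, sum_mul]
        rw [sum_comm]
        refine sum_congr rfl fun k hk => ?_
        rw [one_add_pow_eq_sum_range α (Nat.lt_succ_iff.1 (mem_range.1 hk)), mul_sum, mul_sum]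
        refine sum_congr rfl fun t _ => ?_
        push_cast
        ring
    _ = ∑ l ∈ range (p + 1), (p.choose l : K) * ((p + l).choose l * α ^ (p - l) / (l + 1)) := by
        rw [← sum_range_reflect]
        refine sum_congr rfl fun l hl => ?_
        have hl : l ≤ p := Nat.lt_succ_iff.1 (mem_range.1 hl)
        rw [Nat.add_sub_cancel, sum_range_choose_mul_choose_mul_choose (Nat.sub_add_cancel hl),
          one_div_mul_eq_div, hcoeff l hl]
        ring

end Narayana

/-- The Hermitian limit `τ = 1` of `L1(p1,p2)` equals the Narayana polynomial
`N_p(1+α)` with `p = p1 + p2 ≥ 1`: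
`∑_{r=−min(p1,p2)}^{min(p1,p2)} ∑_{l1=0}^{p1} ∑_{l2=0}^{p2} (α^{p−l1−l2}/(l1+l2+1))
  binom(p1,l1) binom(p1+l1,l1+r) binom(p2,l2) binom(p2+l2,l2−r)
 = ∑_{k=1}^{p} (1/p) binom(p,k) binom(p,k−1) (1+α)^k`. -/
theorem L1_hermitian_limit_narayana (p1 p2 : ℕ) (hp : 1 ≤ p1 + p2) (α : ℝ) :
    ∑ r ∈ Finset.Icc (-(min p1 p2 : ℤ)) (min p1 p2 : ℤ),
        ∑ l1 ∈ Finset.range (p1 + 1), ∑ l2 ∈ Finset.range (p2 + 1),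
          (α ^ (p1 + p2 - l1 - l2) / ((l1 + l2 + 1 : ℕ) : ℝ)) *
            (p1.choose l1 : ℝ) * zbinom (p1 + l1) ((l1 : ℤ) + r) *
            (p2.choose l2 : ℝ) * zbinom (p2 + l2) ((l2 : ℤ) - r)
      = ∑ k ∈ Finset.Icc 1 (p1 + p2),
          (1 / ((p1 + p2 : ℕ) : ℝ)) * ((p1 + p2).choose k : ℝ) *
            ((p1 + p2).choose (k - 1) : ℝ) * (1 + α) ^ k := by
  set f : ℕ → ℝ := fun l => (p1 + p2 + l).choose l * α ^ (p1 + p2 - l) / (l + 1)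
  have hsum_r : ∀ l1 ∈ range (p1 + 1), ∀ l2 ∈ range (p2 + 1),
      ∑ r ∈ Icc (-(min p1 p2 : ℤ)) (min p1 p2 : ℤ),
          (α ^ (p1 + p2 - l1 - l2) / ((l1 + l2 + 1 : ℕ) : ℝ)) *
            (p1.choose l1 : ℝ) * zbinom (p1 + l1) ((l1 : ℤ) + r) *
            (p2.choose l2 : ℝ) * zbinom (p2 + l2) ((l2 : ℤ) - r)
        = (p1.choose l1 * p2.choose l2 : ℝ) * f (l1 + l2) := by
    intro l1 hl1 l2 hl2
    rw [mem_range] at hl1 hl2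
    have hconv := sum_Icc_zbinom_add_mul_zbinom_sub (show l1 ≤ p1 by omega) (show l2 ≤ p2 by omega)
    rw [show p1 + l1 + (p2 + l2) = p1 + p2 + (l1 + l2) by omega] at hconv
    simp only [f]
    rw [← hconv, sum_mul, sum_div, mul_sum, Nat.sub_sub]
    exact sum_congr rfl fun r _ => by push_cast; ring
  calc _ = ∑ l1 ∈ range (p1 + 1), ∑ l2 ∈ range (p2 + 1),
          (p1.choose l1 * p2.choose l2 : ℝ) * f (l1 + l2) := by
        rw [sum_comm]
        exact sum_congr rfl fun l1 hl1 => by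
          rw [sum_comm]; exact sum_congr rfl fun l2 hl2 => hsum_r l1 hl1 l2 hl2
    _ = ∑ l ∈ range (p1 + p2 + 1), ((p1 + p2).choose l : ℝ) * f l :=
        sum_range_sum_range_choose_mul_choose p1 p2 f
    _ = narayana (p1 + p2) (1 + α) := by
        rw [narayana_one_add hp]
end
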